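/- Fix n ≥ 1 and y^n ∈ 𝕐^n, and let q_Y = p_{y^n} be the empirical type of y^n. Let q be any joint probability distribution on 𝕏 × 𝕐 whose 𝕐-marginal equals q_Y. If Z^n = (Z_1,…,Z_n) is an i.i.d. sequence with per-letter distribution p_X, then the probability that the joint type of (Z^n, y^n) equals q satisfies Pr( p_{(Z^n,y^n)} = q ) ≤ 2^{ − n · D( q ‖ p_X × q_Y ) }, where p_X × q_Y denotes the product distribution (x,y) ↦ p_X(x) q_Y(y). -/

import Mathlib

open Finset Filter
open scoped Classical

/-- A probability distribution on a finite type, as a real-valued mass function. -/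
def IsDist {α : Type} [Fintype α] (p : α → ℝ) : Prop :=
  (∀ a, 0 ≤ p a) ∧ ∑ a, p a = 1

/-- The i.i.d. (product) distribution of `n` letters, each with per-letter distribution `p`. -/
noncomputable def iid {X : Type} (p : X → ℝ) (n : ℕ) (xs : Fin n → X) : ℝ :=
  ∏ i, p (xs i)

/-- The additive `n`-letter distortion `d^n(x^n, y^n) = ∑ i, d (x^n i) (y^n i)`. -/
noncomputable def dn {X Y : Type} (d : X → Y → ℝ) (n : ℕ) (xs : Fin n → X) (ys : Fin n → Y) : ℝ :=
  ∑ i, d (xs i) (ys i)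

/-- A general channel: for each block-length `n`, a transition kernel from `𝕏^n` to `𝕐^n`. -/
def Channel (X Y : Type) : Type := ∀ n : ℕ, (Fin n → X) → (Fin n → Y) → ℝ

/-- `c` is a genuine channel: every row is a probability distribution. -/
def IsChannel {X Y : Type} [Fintype X] [Fintype Y] (c : Channel X Y) : Prop :=
  ∀ (n : ℕ) (xs : Fin n → X), IsDist (c n xs)

/-- `Pr((1/n) d^n(X^n, Y^n) > D)` when the i.i.d. `p` source is the input to `c`
(stated with the inequality multiplied through by `n`). -/
noncomputable def probExcess {X Y : Type} [Fintype X] [Fintype Y] (p : X → ℝ)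
    (c : Channel X Y) (d : X → Y → ℝ) (D : ℝ) (n : ℕ) : ℝ :=
  ∑ xs : Fin n → X, ∑ ys : Fin n → Y,
    if (n : ℝ) * D < dn d n xs ys then iid p n xs * c n xs ys else 0

/-- The set `A` of general channels directly communicates the i.i.d. `p` source within
distortion `D`: the probability of excess distortion is bounded by a vanishing sequence `ω`,
uniformly over `c ∈ A`. -/
def DirectlyCommunicates {X Y : Type} [Fintype X] [Fintype Y] (A : Set (Channel X Y))
    (p : X → ℝ) (d : X → Y → ℝ) (D : ℝ) : Prop :=
  ∃ ω : ℕ → ℝ, Tendsto ω atTop (nhds 0) ∧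
    ∀ c ∈ A, ∀ n : ℕ, 1 ≤ n → probExcess p c d D n ≤ ω n

/-- The number `2 ^ ⌊nR⌋` of messages at block-length `n` and rate `R`. -/
noncomputable def msgCount (R : ℝ) (n : ℕ) : ℕ := 2 ^ ⌊(n : ℝ) * R⌋₊

/-- A deterministic rate-`R` block-length-`n` channel code over a channel with input space `I`
and output space `O`: an encoder from messages to `I^n` and a decoder from `O^n` to
messages-or-error (`Option`, with `none` playing the role of the error symbol). -/
abbrev ChCode (I O : Type) (R : ℝ) (n : ℕ) : Type :=
  (Fin (msgCount R n) → Fin n → I) × ((Fin n → O) → Option (Fin (msgCount R n)))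

/-- The probability that the decoder output differs from the message `m`, over the randomness
`κ` of the code and the channel noise. -/
noncomputable def errProb {I O : Type} [Fintype I] [Fintype O] [DecidableEq O]
    (R : ℝ) (n : ℕ) (κ : ChCode I O R n → ℝ) (c : Channel I O) (m : Fin (msgCount R n)) : ℝ :=
  ∑ ef : ChCode I O R n, ∑ ys : Fin n → O,
    if ef.2 ys ≠ some m then κ ef * c n (ef.1 m) ys else 0

/-- Rate `R` is reliably achievable over the set of channels `A` with random codes: a single
random rate-`R` code (a distribution `κ n` on deterministic codes for each `n`) whose
per-message error probability is bounded by a vanishing sequence `δ`, uniformly over `c ∈ A`. -/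
def ReliablyAchievable {I O : Type} [Fintype I] [Fintype O] [DecidableEq O]
    (A : Set (Channel I O)) (R : ℝ) : Prop :=
  ∃ κ : ∀ n : ℕ, ChCode I O R n → ℝ,
    (∀ n, IsDist (κ n)) ∧
    ∃ δ : ℕ → ℝ, Tendsto δ atTop (nhds 0) ∧
      ∀ c ∈ A, ∀ n : ℕ, 1 ≤ n → ∀ m : Fin (msgCount R n), errProb R n (κ n) c m ≤ δ n

/-- The `𝕏`-marginal of a joint distribution on `𝕏 × 𝕐`. -/
noncomputable def margX {X Y : Type} [Fintype X] [Fintype Y] (q : X × Y → ℝ) (x : X) : ℝ :=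
  ∑ y, q (x, y)

/-- The `𝕐`-marginal of a joint distribution on `𝕏 × 𝕐`. -/
noncomputable def margY {X Y : Type} [Fintype X] [Fintype Y] (q : X × Y → ℝ) (y : Y) : ℝ :=
  ∑ x, q (x, y)

/-- The mutual information `I(q) = ∑ q(x,y) log₂ (q(x,y) / (q_Z(x) q_Y(y)))` of a joint
distribution `q` (the convention `0 log 0 = 0` holds automatically since `0 * x = 0`). -/
noncomputable def mutualInfo {X Y : Type} [Fintype X] [Fintype Y] (q : X × Y → ℝ) : ℝ :=
  ∑ z : X × Y, q z * Real.logb 2 (q z / (margX q z.1 * margY q z.2))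

/-- The information-theoretic rate-distortion function `R^I_p(D)`: the infimum (in `EReal`,
so that the infimum over the empty set is `+∞`) of `I(q)` over joint distributions `q` with
`𝕏`-marginal `p` and expected distortion at most `D`. -/
noncomputable def RDF {X Y : Type} [Fintype X] [Fintype Y]
    (p : X → ℝ) (d : X → Y → ℝ) (D : ℝ) : EReal :=
  ⨅ q ∈ {q : X × Y → ℝ |
      IsDist q ∧ (∀ x, margX q x = p x) ∧ ∑ z : X × Y, q z * d z.1 z.2 ≤ D},
    (mutualInfo q : EReal)

/-- The Kullback–Leibler divergence `D(q‖r) = ∑ q(a) log₂ (q(a)/r(a))` (base-2, with the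
convention `0 log 0 = 0`), equal to `+∞` when `q` is not absolutely continuous with respect
to `r`. -/
noncomputable def klDiv {α : Type} [Fintype α] (q r : α → ℝ) : EReal :=
  if ∀ a, r a = 0 → q a = 0 then ((∑ a, q a * Real.logb 2 (q a / r a) : ℝ) : EReal) else ⊤

/-- The empirical type of a sequence `xs ∈ α^n`. -/
noncomputable def empDist {α : Type} [DecidableEq α] {n : ℕ} (xs : Fin n → α) (a : α) : ℝ :=
  ((Finset.univ.filter fun i => xs i = a).card : ℝ) / n

/-- The joint type of a pair of sequences `(zs, ys) ∈ 𝕏^n × 𝕐^n`. -/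
noncomputable def jointType {X Y : Type} [DecidableEq X] [DecidableEq Y] {n : ℕ}
    (zs : Fin n → X) (ys : Fin n → Y) : X × Y → ℝ :=
  empDist (fun i => (zs i, ys i))

/-- `2 ^ (-n·x)` for an extended-real exponent `x ∈ [0, ∞]`, with `2^(-n·∞)` interpreted
as `0`. -/
noncomputable def twoPowNegMul (n : ℕ) (x : EReal) : ℝ :=
  if x = ⊤ then 0 else (2 : ℝ) ^ (-(n : ℝ) * x.toReal)

/-
On the type class `{z^n : p_{(z^n,y^n)} = q}` every letter `(z_i, y_i)` has `q(z_i, y_i) > 0`,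
and `p(x) = 2^{-log₂(q(x,y)/(p(x)q_Y(y)))} · q(x|y)` with `q(x|y) = q(x,y)/q_Y(y)`. Multiplying
over `i` and grouping the letters by their joint type turns the exponents into `−n·D(q‖p_X×q_Y)`,
so `p_X^n(z^n) = 2^{−n D} · q^n(z^n | y^n)` there; summing the conditional law `q^n(· | y^n)`
over the type class gives at most `1`. If `q` is not absolutely continuous, some letter of the
type class has `p(z_i) = 0`, so the type class has probability `0`.
-/

section EmpiricalType

variable {α : Type} [DecidableEq α] {n : ℕ}

lemma empDist_apply_self_pos (xs : Fin n → α) (i : Fin n) : 0 < empDist xs (xs i) := by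
  have hn : (0 : ℝ) < n := by exact_mod_cast i.pos
  exact div_pos (by exact_mod_cast Finset.card_pos.mpr ⟨i, by simp⟩) hn

lemma exists_eq_of_empDist_ne_zero {xs : Fin n → α} {a : α} (h : empDist xs a ≠ 0) :
    ∃ i, xs i = a := by
  by_contra! hne
  simp [empDist, Finset.filter_false_of_mem fun i _ => hne i] at h

lemma sum_comp_eq_mul_sum_empDist [Fintype α] (xs : Fin n → α) (h : α → ℝ) :
    ∑ i, h (xs i) = n * ∑ a, empDist xs a * h a := by
  rcases Nat.eq_zero_or_pos n with rfl | hn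
  · simp
  rw [← Finset.sum_fiberwise' Finset.univ xs h, Finset.mul_sum]
  refine Finset.sum_congr rfl fun a _ => ?_
  rw [Finset.sum_const, nsmul_eq_mul, empDist]
  field_simp

end EmpiricalType

section JointDist

variable {X Y : Type} [Fintype X] [Fintype Y]

noncomputable def condX (q : X × Y → ℝ) (z : X × Y) : ℝ :=
  q z / margY q z.2

lemma le_margY {q : X × Y → ℝ} (hq : ∀ z, 0 ≤ q z) (z : X × Y) : q z ≤ margY q z.2 :=
  Finset.single_le_sum (fun x _ => hq (x, z.2)) (Finset.mem_univ z.1)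

lemma condX_nonneg {q : X × Y → ℝ} (hq : ∀ z, 0 ≤ q z) (z : X × Y) : 0 ≤ condX q z :=
  div_nonneg (hq z) ((hq z).trans (le_margY hq z))

lemma sum_condX {q : X × Y → ℝ} {y : Y} (hy : margY q y ≠ 0) : ∑ x, condX q (x, y) = 1 := by
  simp only [condX, ← Finset.sum_div]
  exact div_self hy

lemma sum_prod_condX {q : X × Y → ℝ} {n : ℕ} {yn : Fin n → Y} (hyn : ∀ i, margY q (yn i) ≠ 0) :
    ∑ zn : Fin n → X, ∏ i, condX q (zn i, yn i) = 1 := by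
  rw [← Fintype.prod_sum fun i x => condX q (x, yn i)]
  exact Finset.prod_eq_one fun i _ => sum_condX (hyn i)

end JointDist

lemma twoPowNegMul_nonneg (n : ℕ) (x : EReal) : 0 ≤ twoPowNegMul n x := by
  unfold twoPowNegMul
  split_ifs
  exacts [le_rfl, Real.rpow_nonneg zero_le_two _]

section TypeClass

variable {X Y : Type} [DecidableEq X] [DecidableEq Y]
  {p : X → ℝ} {n : ℕ} {zn : Fin n → X} {yn : Fin n → Y} {q : X × Y → ℝ}

lemma jointType_pos (h : jointType zn yn = q) (i : Fin n) : 0 < q (zn i, yn i) :=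
  h ▸ empDist_apply_self_pos (fun i => (zn i, yn i)) i

lemma iid_eq_zero_of_not_absolutelyContinuous (h : jointType zn yn = q)
    {z : X × Y} (hrz : p z.1 * empDist yn z.2 = 0) (hqz : q z ≠ 0) : iid p n zn = 0 := by
  obtain ⟨i, rfl⟩ := exists_eq_of_empDist_ne_zero (h ▸ hqz : jointType zn yn z ≠ 0)
  have hY : empDist yn (yn i) ≠ 0 := (empDist_apply_self_pos yn i).ne'
  exact Finset.prod_eq_zero (Finset.mem_univ i) ((mul_eq_zero.mp hrz).resolve_right hY)

variable [Fintype X] [Fintype Y]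

lemma iid_eq_rpow_mul_prod_condX (hp : ∀ x, 0 ≤ p x)
    (hqY : ∀ y, margY q y = empDist yn y) (h : jointType zn yn = q)
    (hac : ∀ z : X × Y, p z.1 * empDist yn z.2 = 0 → q z = 0) :
    iid p n zn = (2 : ℝ) ^ (-(n : ℝ) * ∑ z, q z * Real.logb 2 (q z / (p z.1 * empDist yn z.2)))
      * ∏ i, condX q (zn i, yn i) := by
  set L : X × Y → ℝ := fun z => Real.logb 2 (q z / (p z.1 * empDist yn z.2))
  have hletter : ∀ i, p (zn i) = (2 : ℝ) ^ (-L (zn i, yn i)) * condX q (zn i, yn i) := by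
    intro i
    have hqz := jointType_pos h i
    have hY : 0 < empDist yn (yn i) := empDist_apply_self_pos yn i
    have hr : 0 < p (zn i) * empDist yn (yn i) :=
      (mul_nonneg (hp _) hY.le).lt_of_ne' fun h0 => hqz.ne' (hac _ h0)
    rw [← Real.logb_inv, inv_div, Real.rpow_logb two_pos (by norm_num) (div_pos hr hqz), condX,
      hqY]
    field_simp
  have hsum : ∑ i, L (zn i, yn i) = n * ∑ z, q z * L z := by
    rw [sum_comp_eq_mul_sum_empDist (fun i => (zn i, yn i)) L]
    exact congrArg _ (Finset.sum_congr rfl fun z _ => by rw [← h]; rfl)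
  simp only [iid, hletter, Finset.prod_mul_distrib]
  rw [← Real.rpow_sum_of_pos two_pos, Finset.sum_neg_distrib, hsum, neg_mul]

lemma iid_eq_twoPowNegMul_klDiv_mul (hp : ∀ x, 0 ≤ p x)
    (hqY : ∀ y, margY q y = empDist yn y) (h : jointType zn yn = q) :
    iid p n zn = twoPowNegMul n (klDiv q fun z : X × Y => p z.1 * empDist yn z.2)
      * ∏ i, condX q (zn i, yn i) := by
  by_cases hac : ∀ z : X × Y, p z.1 * empDist yn z.2 = 0 → q z = 0
  · rw [klDiv, if_pos hac, twoPowNegMul, if_neg (EReal.coe_ne_top _), EReal.toReal_coe]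
    exact iid_eq_rpow_mul_prod_condX hp hqY h hac
  · rw [klDiv, if_neg hac, twoPowNegMul, if_pos rfl, zero_mul]
    push Not at hac
    obtain ⟨z, hrz, hqz⟩ := hac
    exact iid_eq_zero_of_not_absolutelyContinuous h hrz hqz

end TypeClass

theorem stmt6_general {X Y : Type} [Fintype X] [Fintype Y]
    [DecidableEq X] [DecidableEq Y]
    (p : X → ℝ) (hp : IsDist p)
    (n : ℕ) (yn : Fin n → Y)
    (q : X × Y → ℝ) (hq : IsDist q) (hqY : ∀ y, margY q y = empDist yn y) :
    (∑ zn : Fin n → X, if jointType zn yn = q then iid p n zn else 0)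
      ≤ twoPowNegMul n (klDiv q (fun z : X × Y => p z.1 * empDist yn z.2)) := by
  set C := twoPowNegMul n (klDiv q fun z : X × Y => p z.1 * empDist yn z.2)
  have hyn : ∀ i, margY q (yn i) ≠ 0 := fun i => hqY _ ▸ (empDist_apply_self_pos yn i).ne'
  calc (∑ zn : Fin n → X, if jointType zn yn = q then iid p n zn else 0)
      ≤ ∑ zn : Fin n → X, C * ∏ i, condX q (zn i, yn i) := by
        refine Finset.sum_le_sum fun zn _ => ?_
        split_ifs with h
        · exact (iid_eq_twoPowNegMul_klDiv_mul hp.1 hqY h).le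
        · exact mul_nonneg (twoPowNegMul_nonneg _ _)
            (Finset.prod_nonneg fun i _ => condX_nonneg hq.1 _)
    _ = C := by rw [← Finset.mul_sum, sum_prod_condX hyn, mul_one]

/-- Fix `n ≥ 1` and `y^n ∈ 𝕐^n` with empirical type `q_Y`. For any joint
distribution `q` on `𝕏 × 𝕐` whose `𝕐`-marginal is `q_Y`, if `Z^n` is i.i.d. with per-letter
distribution `p_X`, then `Pr(p_{(Z^n, y^n)} = q) ≤ 2 ^ (−n · D(q ‖ p_X × q_Y))` (interpreted
as `0` when the divergence is `+∞`). -/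
theorem stmt6 {X Y : Type} [Fintype X] [Fintype Y] [Nonempty X] [Nonempty Y]
    [DecidableEq X] [DecidableEq Y]
    (p : X → ℝ) (hp : IsDist p)
    (n : ℕ) (hn : 1 ≤ n) (yn : Fin n → Y)
    (q : X × Y → ℝ) (hq : IsDist q) (hqY : ∀ y, margY q y = empDist yn y) :
    (∑ zn : Fin n → X, if jointType zn yn = q then iid p n zn else 0)
      ≤ twoPowNegMul n (klDiv q (fun z : X × Y => p z.1 * empDist yn z.2)) :=
  stmt6_general p hp n yn q hq hqY
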